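/- The set S_{(s,0)} is perfect: it is closed and has no isolated points. -/

import Mathlib

open Finset

/-!
`S_{(s,0)}` is the image of the compact space `{1, …, s-1}^ℕ` under the coding map, which is
continuous because its series is dominated by `Σ s^{-(n+1)}`; hence the set is closed.
For `s ≥ 3` the coding map is injective: writing `x = (c₀ + x') / s^{c₀}` with `x' ∈ [0, 1)`
the value of the shifted sequence, a larger first digit gives a strictly smaller value because
`(b + 1) / s^b ≤ a / s^a` for `1 ≤ a < b`. Changing the `n`-th digit of a sequence therefore
produces a different point of the set within distance `s^{-n}`, so no point is isolated.
-/

/-- The term of the series: `c n / s ^ (c 1 + ... + c (n+1))` (0-indexed). -/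
noncomputable def sTerm (s : ℕ) (c : ℕ → ℕ) (n : ℕ) : ℝ :=
  (c n : ℝ) / (s : ℝ) ^ (∑ k ∈ Finset.range (n + 1), c k)

/-- `x = Σ_{k=1}^∞ c_k / s^{c_1+⋯+c_k}`. -/
noncomputable def sVal (s : ℕ) (c : ℕ → ℕ) : ℝ := ∑' n : ℕ, sTerm s c n

/-- The sequence `(c_k)` has all terms in `{1, ..., s-1}`. -/
def sValid (s : ℕ) (c : ℕ → ℕ) : Prop := ∀ k, 1 ≤ c k ∧ c k ≤ s - 1

/-- The set `S_{(s,0)}`. -/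
def Sset (s : ℕ) : Set ℝ := { x | ∃ c : ℕ → ℕ, sValid s c ∧ x = sVal s c }

/-- The cylinder `Δ'_{c_1 ... c_n}` of rank `n` with base the first `n` terms of `c`. -/
def cyl (s n : ℕ) (c : ℕ → ℕ) : Set ℝ :=
  { x | ∃ c' : ℕ → ℕ, sValid s c' ∧ (∀ k < n, c' k = c k) ∧ x = sVal s c' }

/-- The cylinder `Δ'_{c_1 ... c_n p}`: prefix of length `n` from `c`, next digit `p`. -/
def cylExt (s n : ℕ) (c : ℕ → ℕ) (p : ℕ) : Set ℝ :=
  { x | ∃ c' : ℕ → ℕ, sValid s c' ∧ (∀ k < n, c' k = c k) ∧ c' n = p ∧ x = sVal s c' }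

/-- `g_n = Σ_{k=1}^n c_k / s^{c_1+⋯+c_k}`. -/
noncomputable def gPart (s n : ℕ) (c : ℕ → ℕ) : ℝ := ∑ k ∈ Finset.range n, sTerm s c k

section
open Filter Topology

variable {s : ℕ} {c c' : ℕ → ℕ}

lemma sValid.one_le (hc : sValid s c) (k : ℕ) : 1 ≤ c k :=
  (hc k).1

lemma sTerm_nonneg (s : ℕ) (c : ℕ → ℕ) (n : ℕ) : 0 ≤ sTerm s c n := by
  unfold sTerm; positivity

lemma summable_inv_pow_succ (hs : 1 < s) : Summable fun n : ℕ => (s : ℝ)⁻¹ ^ (n + 1) :=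
  (summable_nat_add_iff 1).mpr <|
    summable_geometric_of_lt_one (by positivity) (inv_lt_one_of_one_lt₀ (by exact_mod_cast hs))

lemma sTerm_le_inv_pow (hs : 1 < s) (hc : ∀ k, 1 ≤ c k) (n : ℕ) :
    sTerm s c n ≤ (s : ℝ)⁻¹ ^ (n + 1) := by
  have hσ : n + c n ≤ ∑ k ∈ range (n + 1), c k := by
    rw [sum_range_succ]
    simpa using card_nsmul_le_sum (range n) c 1 fun k _ => hc k
  have hcn : c n ≤ s ^ (c n - 1) := by
    have := Nat.lt_pow_self (n := c n - 1) hs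
    have := hc n
    omega
  have key : c n * s ^ (n + 1) ≤ s ^ ∑ k ∈ range (n + 1), c k :=
    calc c n * s ^ (n + 1) ≤ s ^ (c n - 1) * s ^ (n + 1) := Nat.mul_le_mul_right _ hcn
      _ = s ^ (n + c n) := by rw [← pow_add]; congr 1; have := hc n; omega
      _ ≤ _ := Nat.pow_le_pow_right (by omega) hσ
  rw [sTerm, inv_pow, ← one_div, div_le_div_iff₀ (by positivity) (by positivity), one_mul]
  exact_mod_cast key

lemma summable_sTerm (hs : 1 < s) (hc : ∀ k, 1 ≤ c k) : Summable (sTerm s c) :=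
  .of_nonneg_of_le (sTerm_nonneg s c) (sTerm_le_inv_pow hs hc) (summable_inv_pow_succ hs)

lemma sVal_nonneg (s : ℕ) (c : ℕ → ℕ) : 0 ≤ sVal s c :=
  tsum_nonneg (sTerm_nonneg s c)

lemma sVal_lt_one (hs : 2 < s) (hc : ∀ k, 1 ≤ c k) : sVal s c < 1 := by
  have hs' : (3 : ℝ) ≤ s := by exact_mod_cast hs
  have hr : (s : ℝ)⁻¹ ≤ 3⁻¹ := inv_anti₀ (by norm_num) hs'
  have hr1 : (s : ℝ)⁻¹ < 1 := by linarith
  calc sVal s c ≤ ∑' n : ℕ, (s : ℝ)⁻¹ ^ (n + 1) :=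
        (summable_sTerm (by omega) hc).tsum_le_tsum (sTerm_le_inv_pow (by omega) hc)
          (summable_inv_pow_succ (by omega))
    _ = (s : ℝ)⁻¹ * (1 - (s : ℝ)⁻¹)⁻¹ := by
        simp_rw [pow_succ']
        rw [tsum_mul_left, tsum_geometric_of_lt_one (by positivity) hr1]
    _ < 1 := by
        rw [← div_eq_mul_inv, div_lt_one (by linarith)]
        linarith

lemma sTerm_succ (s : ℕ) (c : ℕ → ℕ) (n : ℕ) :
    sTerm s c (n + 1) = sTerm s (fun k => c (k + 1)) n / (s : ℝ) ^ c 0 := by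
  rw [sTerm, sTerm, sum_range_succ' c (n + 1), pow_add, div_div]

lemma sVal_eq_head (hs : 1 < s) (hc : ∀ k, 1 ≤ c k) :
    sVal s c = (c 0 + sVal s (fun k => c (k + 1))) / (s : ℝ) ^ c 0 := by
  rw [sVal, (summable_sTerm hs hc).tsum_eq_zero_add]
  simp_rw [sTerm_succ]
  rw [tsum_div_const, add_div, sVal, sTerm]
  simp

lemma succ_div_pow_le_div_pow (hs : 2 < s) {a b : ℕ} (ha : 1 ≤ a) (hab : a < b) :
    ((b : ℝ) + 1) / (s : ℝ) ^ b ≤ a / (s : ℝ) ^ a := by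
  obtain ⟨d, rfl⟩ := Nat.exists_eq_add_of_lt hab
  have hs' : (3 : ℝ) ≤ s := by exact_mod_cast hs
  have ha' : (1 : ℝ) ≤ a := by exact_mod_cast ha
  have bernoulli : 1 + ((d + 1 : ℕ) : ℝ) * ((s : ℝ) - 1) ≤ (s : ℝ) ^ (d + 1) := by
    simpa using one_add_mul_le_pow (a := (s : ℝ) - 1) (by linarith) (d + 1)
  have hpow : 2 * (d : ℝ) + 3 ≤ (s : ℝ) ^ (d + 1) := by
    push_cast at bernoulli
    nlinarith
  have key : ((a + d + 1 : ℕ) : ℝ) + 1 ≤ a * (s : ℝ) ^ (d + 1) := by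
    push_cast
    nlinarith [mul_le_mul_of_nonneg_left hpow (by linarith : (0 : ℝ) ≤ a)]
  rw [div_le_div_iff₀ (by positivity) (by positivity),
    show (s : ℝ) ^ (a + d + 1) = (s : ℝ) ^ a * (s : ℝ) ^ (d + 1) by ring]
  calc _ ≤ (a * (s : ℝ) ^ (d + 1)) * (s : ℝ) ^ a := by gcongr
    _ = _ := by ring

lemma sVal_lt_of_head_lt (hs : 2 < s) (hc : ∀ k, 1 ≤ c k) (hc' : ∀ k, 1 ≤ c' k)
    (h : c 0 < c' 0) : sVal s c' < sVal s c := by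
  have hs1 : 1 < s := by omega
  have hy' := sVal_lt_one hs fun k => hc' (k + 1)
  have hy := sVal_nonneg s fun k => c (k + 1)
  calc sVal s c' = (c' 0 + sVal s (fun k => c' (k + 1))) / (s : ℝ) ^ c' 0 :=
        sVal_eq_head hs1 hc'
    _ < (c' 0 + 1) / (s : ℝ) ^ c' 0 := by gcongr
    _ ≤ c 0 / (s : ℝ) ^ c 0 := succ_div_pow_le_div_pow hs (hc 0) h
    _ ≤ (c 0 + sVal s (fun k => c (k + 1))) / (s : ℝ) ^ c 0 := by gcongr; linarith
    _ = sVal s c := (sVal_eq_head hs1 hc).symm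

lemma head_eq_of_sVal_eq (hs : 2 < s) (hc : ∀ k, 1 ≤ c k) (hc' : ∀ k, 1 ≤ c' k)
    (h : sVal s c = sVal s c') : c 0 = c' 0 := by
  rcases lt_trichotomy (c 0) (c' 0) with hlt | heq | hgt
  · exact absurd h (sVal_lt_of_head_lt hs hc hc' hlt).ne'
  · exact heq
  · exact absurd h (sVal_lt_of_head_lt hs hc' hc hgt).ne

lemma sVal_injOn (hs : 2 < s) : Set.InjOn (sVal s) {c | ∀ k, 1 ≤ c k} := by
  intro c hc c' hc' h
  funext n
  induction n generalizing c c' with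
  | zero => exact head_eq_of_sVal_eq hs hc hc' h
  | succ n ih =>
    have h0 := head_eq_of_sVal_eq hs hc hc' h
    rw [sVal_eq_head (by omega) hc, sVal_eq_head (by omega) hc', h0,
      div_left_inj' (by positivity), add_right_inj] at h
    exact ih (fun k => hc (k + 1)) (fun k => hc' (k + 1)) h

lemma abs_sVal_sub_le (hs : 2 < s) (hc : ∀ k, 1 ≤ c k) (hc' : ∀ k, 1 ≤ c' k) (n : ℕ)
    (h : ∀ k < n, c k = c' k) : |sVal s c - sVal s c'| ≤ (s : ℝ)⁻¹ ^ n := by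
  induction n generalizing c c' with
  | zero =>
    have := sVal_lt_one hs hc
    have := sVal_lt_one hs hc'
    have := sVal_nonneg s c
    have := sVal_nonneg s c'
    rw [pow_zero, abs_sub_le_iff]
    constructor <;> linarith
  | succ n ih =>
    have h0 : c 0 = c' 0 := h 0 n.succ_pos
    have htail :=
      ih (fun k => hc (k + 1)) (fun k => hc' (k + 1)) fun k hk => h (k + 1) (by omega)
    have hs1 : (1 : ℝ) ≤ s := by exact_mod_cast (by omega : 1 ≤ s)
    have hs0 : (0 : ℝ) < s := by linarith
    rw [sVal_eq_head (by omega) hc, sVal_eq_head (by omega) hc', h0, ← sub_div,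
      add_sub_add_left_eq_sub, abs_div, abs_of_pos (pow_pos hs0 _), pow_succ, ← div_eq_mul_inv]
    exact div_le_div₀ (by positivity) htail (by positivity)
      (le_self_pow₀ hs1 (Nat.one_le_iff_ne_zero.mp (hc' 0)))

lemma continuous_sTerm (s i : ℕ) : Continuous fun c : ℕ → ℕ => sTerm s c i :=
  (continuous_of_discreteTopology (f := fun p : ℕ × ℕ => (p.1 : ℝ) / (s : ℝ) ^ p.2)).comp
    ((continuous_apply i).prodMk
      (continuous_finsetSum (range (i + 1)) fun k _ => continuous_apply k))

lemma continuousOn_sVal (hs : 1 < s) : ContinuousOn (sVal s) {c | ∀ k, 1 ≤ c k} :=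
  continuousOn_tsum (fun i => (continuous_sTerm s i).continuousOn) (summable_inv_pow_succ hs)
    fun n c hc => (Real.norm_of_nonneg (sTerm_nonneg s c n)).trans_le (sTerm_le_inv_pow hs hc n)

lemma isCompact_setOf_sValid (s : ℕ) : IsCompact {c | sValid s c} := by
  have : {c | sValid s c} = Set.univ.pi fun _ => Set.Icc 1 (s - 1) := by
    ext c
    simp only [sValid, Set.mem_ofPred_eq, Set.mem_pi, Set.mem_univ, true_implies, Set.mem_Icc]
  rw [this]
  exact isCompact_univ_pi fun _ => (Set.finite_Icc _ _).isCompact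

lemma Sset_eq_image (s : ℕ) : Sset s = sVal s '' {c | sValid s c} := by
  ext x; simp [Sset, eq_comm]

lemma isClosed_Sset (hs : 1 < s) : IsClosed (Sset s) := by
  rw [Sset_eq_image]
  exact ((isCompact_setOf_sValid s).image_of_continuousOn
    ((continuousOn_sVal hs).mono fun _ => sValid.one_le)).isClosed

lemma exists_sValid_ne_eq_of_lt (hs : 2 < s) (hc : sValid s c) (n : ℕ) :
    ∃ c', sValid s c' ∧ c' ≠ c ∧ ∀ k < n, c' k = c k := by
  refine ⟨Function.update c n (if c n = 1 then 2 else 1), fun k => ?_, fun h => ?_,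
    fun k hk => Function.update_of_ne hk.ne _ _⟩
  · rcases eq_or_ne k n with rfl | hk
    · rw [Function.update_self]; split_ifs <;> omega
    · rw [Function.update_of_ne hk]; exact hc k
  · have := congrFun h n
    rw [Function.update_self] at this
    have := hc n
    split_ifs at * <;> omega

lemma accPt_sVal (hs : 2 < s) (hc : sValid s c) : AccPt (sVal s c) (𝓟 (Sset s)) := by
  choose u hu hne heq using exists_sValid_ne_eq_of_lt hs hc
  have hlim : Tendsto (fun n => sVal s (u n)) atTop (𝓝 (sVal s c)) := by
    rw [tendsto_iff_norm_sub_tendsto_zero]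
    refine squeeze_zero (fun _ => norm_nonneg _)
      (fun n => abs_sVal_sub_le hs (hu n).one_le hc.one_le n (heq n)) ?_
    exact tendsto_pow_atTop_nhds_zero_of_lt_one (by positivity)
      (inv_lt_one_of_one_lt₀ (by exact_mod_cast (by omega : 1 < s)))
  rw [accPt_iff_frequently]
  exact hlim.frequently <| Frequently.of_forall fun n =>
    ⟨fun h => hne n (sVal_injOn hs (hu n).one_le hc.one_le h), u n, hu n, rfl⟩

end

theorem stmt13 (s : ℕ) (hs : 2 < s) : Perfect (Sset s) := by
  refine ⟨isClosed_Sset (by omega), ?_⟩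
  rintro _ ⟨c, hc, rfl⟩
  exact accPt_sVal hs hc
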